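/- Let H be a real inner product space, λ > 0, and let L_1, …, L_{mα} : H → ℝ be convex differentiable loss terms, grouped so that sample i contributes the α terms L_{(i−1)α+1}, …, L_{iα}. Let f minimize g ↦ (1/(mn)) Σ_{j=1}^{mα} L_j(g) + (λ/2)‖g‖² and let f^{∖i} minimize the same objective with all α terms of sample i omitted. Suppose each omitted term decomposes as L_{(i,j)}(g) = Σ_{k=1}^{n/α} c_{j,k}(E_{j,k}(g)), where each c_{j,k} : ℝ → ℝ is τ-Lipschitz and each E_{j,k} : H → ℝ is ρ-admissible at the corresponding mini-sample input x_{(i,j)} with ‖x_{(i,j)}‖ ≤ nv√d/α. Then for every evaluation functional E that is ρ-admissible at a test input x with ‖x‖ ≤ nv√d, it holds that |E(f) − E(f^{∖i})| ≤ dτρ²v²n²/(mλα), which equals α times the bound dτρ²v²n²/(mλα²) for removing a single mini-sample. -/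

import Mathlib

/-!
Both regularized objectives are `λ`-strongly convex, so each minimizer undercuts the other
one's objective value by at least `λ/2 ‖f - f'‖²`. Adding the two inequalities leaves
`λ ‖f - f'‖² ≤ B f' - B f`, where `B` is the scaled loss of the removed sample. As a sum of
`n` terms `τ`-Lipschitz in `ρ`-admissible functionals at inputs of norm `≤ n v √d / α`,
scaled by `1 / (m n)`, `B` changes by at most `τ ρ (n v √d / (m α)) ‖f - f'‖`; hence
`‖f - f'‖ ≤ τ ρ n v √d / (m λ α)`, and a test functional admissible at an input of norm
`≤ n v √d` moves by at most `ρ ‖f - f'‖ n v √d`.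
-/

open Set Finset Filter Topology

/-- The input enters only through its norm `x`. -/
def IsAdmissible {H : Type*} [NormedAddCommGroup H] (ρ x : ℝ) (E : H → ℝ) : Prop :=
  ∀ g g' : H, |E g - E g'| ≤ ρ * ‖g - g'‖ * x

namespace IsAdmissible

variable {H : Type*} [NormedAddCommGroup H] {ρ x : ℝ} {E : H → ℝ}

theorem mono (hE : IsAdmissible ρ x E) (hρ : 0 ≤ ρ) {y : ℝ} (hxy : x ≤ y) :
    IsAdmissible ρ y E := fun g g' =>
  (hE g g').trans (by gcongr)

theorem comp {τ : ℝ} {c : ℝ → ℝ} (hE : IsAdmissible ρ x E)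
    (hc : ∀ a b, |c a - c b| ≤ τ * |a - b|) (hτ : 0 ≤ τ) :
    IsAdmissible (τ * ρ) x fun g => c (E g) := fun g g' =>
  calc |c (E g) - c (E g')| ≤ τ * |E g - E g'| := hc _ _
    _ ≤ τ * (ρ * ‖g - g'‖ * x) := by gcongr; exact hE g g'
    _ = τ * ρ * ‖g - g'‖ * x := by ring

theorem const_mul {a : ℝ} (hE : IsAdmissible ρ x E) (ha : 0 ≤ a) :
    IsAdmissible ρ (a * x) fun g => a * E g := fun g g' =>
  calc |a * E g - a * E g'| = a * |E g - E g'| := by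
        rw [← mul_sub, abs_mul, abs_of_nonneg ha]
    _ ≤ a * (ρ * ‖g - g'‖ * x) := by gcongr; exact hE g g'
    _ = ρ * ‖g - g'‖ * (a * x) := by ring

theorem sum {ι : Type*} (s : Finset ι) {x : ι → ℝ} {E : ι → H → ℝ}
    (hE : ∀ k ∈ s, IsAdmissible ρ (x k) (E k)) :
    IsAdmissible ρ (∑ k ∈ s, x k) fun g => ∑ k ∈ s, E k g := fun g g' =>
  calc |∑ k ∈ s, E k g - ∑ k ∈ s, E k g'| ≤ ∑ k ∈ s, |E k g - E k g'| := by
        rw [← Finset.sum_sub_distrib]; exact Finset.abs_sum_le_sum_abs _ _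
    _ ≤ ∑ k ∈ s, ρ * ‖g - g'‖ * x k := Finset.sum_le_sum fun k hk => hE k hk g g'
    _ = ρ * ‖g - g'‖ * ∑ k ∈ s, x k := by rw [Finset.mul_sum]

end IsAdmissible

theorem ConvexOn.finset_sum {E ι : Type*} [AddCommGroup E] [Module ℝ E] {s : Set E}
    (hs : Convex ℝ s) (t : Finset ι) {f : ι → E → ℝ} (hf : ∀ i ∈ t, ConvexOn ℝ s (f i)) :
    ConvexOn ℝ s fun x => ∑ i ∈ t, f i x := by
  simpa only [Finset.sum_fn] using
    Finset.sum_induction f (ConvexOn ℝ s) (fun _ _ => ConvexOn.add) (convexOn_const 0 hs) hf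

theorem StrongConvexOn.mul_sq_norm_sub_le_sub_of_isMinOn {E : Type*} [NormedAddCommGroup E]
    [NormedSpace ℝ E] {s : Set E} {m : ℝ} {J : E → ℝ} {x y : E} (hJ : StrongConvexOn s m J)
    (hx : IsMinOn J s x) (hxs : x ∈ s) (hys : y ∈ s) :
    m / 2 * ‖y - x‖ ^ 2 ≤ J y - J x := by
  have key : ∀ t ∈ Ioo (0 : ℝ) 1, (1 - t) * (m / 2 * ‖y - x‖ ^ 2) ≤ J y - J x := by
    rintro t ⟨ht0, ht1⟩
    have hcomb := hJ.2 hys hxs ht0.le (sub_nonneg.2 ht1.le) (add_sub_cancel t 1)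
    have hmin := isMinOn_iff.1 hx _ <|
      hJ.1 hys hxs ht0.le (sub_nonneg.2 ht1.le) (add_sub_cancel t 1)
    simp only [smul_eq_mul] at hcomb
    refine le_of_mul_le_mul_left ?_ ht0
    linarith
  have hlim : Tendsto (fun t : ℝ => (1 - t) * (m / 2 * ‖y - x‖ ^ 2)) (𝓝[>] 0)
      (𝓝 (m / 2 * ‖y - x‖ ^ 2)) :=
    tendsto_nhdsWithin_of_tendsto_nhds <|
      ((continuous_const.sub continuous_id).mul continuous_const).tendsto' _ _ (by simp)
  exact le_of_tendsto hlim (eventually_of_mem (Ioo_mem_nhdsGT zero_lt_one) key)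

theorem ConvexOn.strongConvexOn_add_sq_norm {E : Type*} [NormedAddCommGroup E]
    [InnerProductSpace ℝ E] {s : Set E} {A : E → ℝ} {lam : ℝ} (hA : ConvexOn ℝ s A) :
    StrongConvexOn s lam fun g => A g + lam / 2 * ‖g‖ ^ 2 :=
  strongConvexOn_iff_convex.2 (by simpa only [add_sub_cancel_right] using hA)

theorem norm_sub_le_of_isMinOn_regularized {E : Type*} [NormedAddCommGroup E]
    [InnerProductSpace ℝ E] {s : Set E} {A B : E → ℝ} {lam ρ x : ℝ} {f f' : E}
    (hA : ConvexOn ℝ s A) (hAB : ConvexOn ℝ s fun g => A g + B g) (hlam : 0 < lam)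
    (hf : IsMinOn (fun g => A g + B g + lam / 2 * ‖g‖ ^ 2) s f)
    (hf' : IsMinOn (fun g => A g + lam / 2 * ‖g‖ ^ 2) s f') (hfs : f ∈ s) (hf's : f' ∈ s)
    (hB : IsAdmissible ρ x B) (hρx : 0 ≤ ρ * x) :
    ‖f - f'‖ ≤ ρ * x / lam := by
  have hgrowth :=
    hAB.strongConvexOn_add_sq_norm.mul_sq_norm_sub_le_sub_of_isMinOn hf hfs hf's
  have hgrowth' :=
    hA.strongConvexOn_add_sq_norm.mul_sq_norm_sub_le_sub_of_isMinOn hf' hf's hfs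
  have hB' := (le_abs_self _).trans (hB f' f)
  rw [norm_sub_rev f' f] at hgrowth hB'
  rw [le_div_iff₀ hlam]
  nlinarith [norm_nonneg (f - f')]

theorem one_div_mul_sum_fin_div_le (m n α : ℕ) {X : ℝ} (hX : 0 ≤ X) :
    1 / ((m : ℝ) * n) * ∑ _j : Fin α, ∑ _k : Fin (n / α), X ≤ X / m := by
  have hcard : ((α * (n / α) : ℕ) : ℝ) ≤ n := by exact_mod_cast Nat.mul_div_le n α
  calc 1 / ((m : ℝ) * n) * ∑ _j : Fin α, ∑ _k : Fin (n / α), X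
        = 1 / ((m : ℝ) * n) * ((α * (n / α) : ℕ) : ℝ) * X := by
          simp only [Finset.sum_const, Finset.card_univ, Fintype.card_fin, nsmul_eq_mul]
          push_cast; ring
    _ ≤ 1 / ((m : ℝ) * n) * n * X := by gcongr
    _ = (n / n) * X / m := by ring
    _ ≤ X / m := by gcongr; exact mul_le_of_le_one_left hX (div_self_le_one (n : ℝ))

theorem function_stability_remove_full_sample_general
    {H : Type*} [NormedAddCommGroup H] [InnerProductSpace ℝ H]
    (m n α d : ℕ)
    (L : Fin m → Fin α → H → ℝ)      -- sample i contributes the terms L i j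
    (hconv : ∀ i j, ConvexOn ℝ univ (L i j))
    (lam : ℝ) (hlam : 0 < lam)
    (i₀ : Fin m) (f f' : H)
    (hf : ∀ g : H,
      (1 / ((m : ℝ) * n)) * ∑ i, ∑ j, L i j f + lam / 2 * ‖f‖ ^ 2
        ≤ (1 / ((m : ℝ) * n)) * ∑ i, ∑ j, L i j g + lam / 2 * ‖g‖ ^ 2)
    (hf' : ∀ g : H,
      (1 / ((m : ℝ) * n)) * ∑ i ∈ univ.erase i₀, ∑ j, L i j f' + lam / 2 * ‖f'‖ ^ 2
        ≤ (1 / ((m : ℝ) * n)) * ∑ i ∈ univ.erase i₀, ∑ j, L i j g + lam / 2 * ‖g‖ ^ 2)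
    (τ ρ v : ℝ) (hτ : 0 ≤ τ) (hρ : 0 ≤ ρ) (hv : 0 ≤ v)
    (c : Fin α → Fin (n / α) → ℝ → ℝ) (E : Fin α → Fin (n / α) → H → ℝ)
    (xnorm : Fin α → ℝ)
    (hxb : ∀ j, xnorm j ≤ (n : ℝ) * v * Real.sqrt d / α)
    (hdecomp : ∀ (j : Fin α) (g : H), L i₀ j g = ∑ k, c j k (E j k g))
    (hlip : ∀ (j : Fin α) (k : Fin (n / α)) (a b : ℝ),
      |c j k a - c j k b| ≤ τ * |a - b|)
    (hadm : ∀ (j : Fin α) (k : Fin (n / α)) (g g' : H),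
      |E j k g - E j k g'| ≤ ρ * ‖g - g'‖ * xnorm j) :
    (∀ (Etest : H → ℝ) (xt : ℝ), 0 ≤ xt → xt ≤ (n : ℝ) * v * Real.sqrt d →
      (∀ g g' : H, |Etest g - Etest g'| ≤ ρ * ‖g - g'‖ * xt) →
      |Etest f - Etest f'|
        ≤ (d : ℝ) * τ * ρ ^ 2 * v ^ 2 * n ^ 2 / ((m : ℝ) * lam * α)) ∧
    (d : ℝ) * τ * ρ ^ 2 * v ^ 2 * n ^ 2 / ((m : ℝ) * lam * α)
      = (α : ℝ) * ((d : ℝ) * τ * ρ ^ 2 * v ^ 2 * n ^ 2 / ((m : ℝ) * lam * α ^ 2)) := by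
  set C : ℝ := 1 / ((m : ℝ) * n)
  set X : ℝ := n * v * Real.sqrt d / α
  have hC : 0 ≤ C := by positivity
  have hX : 0 ≤ X := by positivity
  have hsplit : ∀ g, C * ∑ i, ∑ j, L i j g
      = C * ∑ i ∈ univ.erase i₀, ∑ j, L i j g + C * ∑ j, L i₀ j g := fun g => by
    rw [← Finset.sum_erase_add _ _ (mem_univ i₀), mul_add]
  have hsum_convex : ∀ t : Finset (Fin m), ConvexOn ℝ univ fun g => C * ∑ i ∈ t, ∑ j, L i j g :=
    fun t => by simpa only [smul_eq_mul] using
      (ConvexOn.finset_sum convex_univ t fun i _ =>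
        ConvexOn.finset_sum convex_univ _ fun j _ => hconv i j).smul hC
  have hB : IsAdmissible (τ * ρ) (C * ∑ _j : Fin α, ∑ _k : Fin (n / α), X)
      fun g => C * ∑ j, L i₀ j g := by
    simp only [hdecomp]
    exact .const_mul (.sum _ fun j _ => .sum _ fun k _ =>
      (IsAdmissible.comp (hadm j k) (hlip j k) hτ).mono (by positivity) (hxb j)) hC
  have hshift := norm_sub_le_of_isMinOn_regularized (hsum_convex _)
    (by simpa only [← hsplit] using hsum_convex univ) hlam
    (isMinOn_univ_iff.2 fun g => by simpa only [← hsplit] using hf g)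
    (isMinOn_univ_iff.2 hf') (mem_univ f) (mem_univ f') hB (by positivity)
  refine ⟨fun Etest xt hxt0 hxt hEtest => ?_, ?_⟩
  · calc |Etest f - Etest f'| ≤ ρ * ‖f - f'‖ * xt := hEtest f f'
      _ ≤ ρ * (τ * ρ * (X / m) / lam) * (n * v * Real.sqrt d) := by
          gcongr; exact hshift.trans (by gcongr; exact one_div_mul_sum_fin_div_le m n α hX)
      _ = (d : ℝ) * τ * ρ ^ 2 * v ^ 2 * n ^ 2 / ((m : ℝ) * lam * α) := by
          simp only [X]
          linear_combination (τ * ρ ^ 2 * v ^ 2 * n ^ 2 / ((m : ℝ) * lam * α))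
            * Real.mul_self_sqrt (Nat.cast_nonneg d)
  · rcases eq_or_ne (α : ℝ) 0 with hα | hα
    · simp [hα]
    · field_simp

/-- **Function stability when removing a full sample (Corollary 1).**
`f` minimizes the L2- and structure-regularized objective over all `m α`
mini-sample loss terms (indexed by sample `i : Fin m` and mini-sample `j : Fin α`),
and `f'` minimizes the same objective with all `α` terms of sample `i₀` omitted.
Then any ρ-admissible evaluation functional at a test input of norm at most
`n v √d` changes by at most `d τ ρ² v² n² / (m λ α)`, which equals `α` times the
bound `d τ ρ² v² n² / (m λ α²)` for removing a single mini-sample. -/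
theorem function_stability_remove_full_sample
    {H : Type*} [NormedAddCommGroup H] [InnerProductSpace ℝ H]
    (m n α d : ℕ) (hm : 0 < m) (hn : 0 < n) (hα : 0 < α) (hdvd : α ∣ n)
    (L : Fin m → Fin α → H → ℝ)      -- sample i contributes the terms L i j
    (hconv : ∀ i j, ConvexOn ℝ univ (L i j))
    (hdiff : ∀ i j, Differentiable ℝ (L i j))
    (lam : ℝ) (hlam : 0 < lam)
    (i₀ : Fin m) (f f' : H)
    (hf : ∀ g : H,
      (1 / ((m : ℝ) * n)) * ∑ i, ∑ j, L i j f + lam / 2 * ‖f‖ ^ 2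
        ≤ (1 / ((m : ℝ) * n)) * ∑ i, ∑ j, L i j g + lam / 2 * ‖g‖ ^ 2)
    (hf' : ∀ g : H,
      (1 / ((m : ℝ) * n)) * ∑ i ∈ univ.erase i₀, ∑ j, L i j f' + lam / 2 * ‖f'‖ ^ 2
        ≤ (1 / ((m : ℝ) * n)) * ∑ i ∈ univ.erase i₀, ∑ j, L i j g + lam / 2 * ‖g‖ ^ 2)
    (τ ρ v : ℝ) (hτ : 0 ≤ τ) (hρ : 0 ≤ ρ) (hv : 0 ≤ v)
    (c : Fin α → Fin (n / α) → ℝ → ℝ) (E : Fin α → Fin (n / α) → H → ℝ)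
    (xnorm : Fin α → ℝ) (hx0 : ∀ j, 0 ≤ xnorm j)
    (hxb : ∀ j, xnorm j ≤ (n : ℝ) * v * Real.sqrt d / α)
    (hdecomp : ∀ (j : Fin α) (g : H), L i₀ j g = ∑ k, c j k (E j k g))
    (hlip : ∀ (j : Fin α) (k : Fin (n / α)) (a b : ℝ),
      |c j k a - c j k b| ≤ τ * |a - b|)
    (hadm : ∀ (j : Fin α) (k : Fin (n / α)) (g g' : H),
      |E j k g - E j k g'| ≤ ρ * ‖g - g'‖ * xnorm j) :
    (∀ (Etest : H → ℝ) (xt : ℝ), 0 ≤ xt → xt ≤ (n : ℝ) * v * Real.sqrt d →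
      (∀ g g' : H, |Etest g - Etest g'| ≤ ρ * ‖g - g'‖ * xt) →
      |Etest f - Etest f'|
        ≤ (d : ℝ) * τ * ρ ^ 2 * v ^ 2 * n ^ 2 / ((m : ℝ) * lam * α)) ∧
    (d : ℝ) * τ * ρ ^ 2 * v ^ 2 * n ^ 2 / ((m : ℝ) * lam * α)
      = (α : ℝ) * ((d : ℝ) * τ * ρ ^ 2 * v ^ 2 * n ^ 2 / ((m : ℝ) * lam * α ^ 2)) :=
  function_stability_remove_full_sample_general m n α d L hconv lam hlam i₀ f f' hf hf' τ ρ v hτ hρ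
    hv c E xnorm hxb hdecomp hlip hadm
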